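/- Let A = [[0,1],[−1,0]] and B = [[0,i],[i,0]], both elements of SU(2), and let σ = (A, B) ∈ SU(2)×SU(2). Then: (1) (S(A) ⊗ B)·p = i·p, so σ stabilizes the complex line ℂ·p; (2) σ⁴ = (I₂, I₂) while σ² = (−I₂, −I₂) ≠ (I₂, I₂), so σ has order 4 in SU(2)×SU(2). -/
import Mathlib

open Matrix Kronecker

/-- The induced action of `g ∈ SU(2)` on `S²(ℂ²)` in the orthonormal basis
`(e₁², √2·e₁e₂, e₂²)`. -/
noncomputable def SMat (g : Matrix (Fin 2) (Fin 2) ℂ) : Matrix (Fin 3) (Fin 3) ℂ :=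
  !![g 0 0 ^ 2, (Real.sqrt 2 : ℂ) * (g 0 0 * g 0 1), g 0 1 ^ 2;
     (Real.sqrt 2 : ℂ) * (g 0 0 * g 1 0), g 0 0 * g 1 1 + g 0 1 * g 1 0,
       (Real.sqrt 2 : ℂ) * (g 0 1 * g 1 1);
     g 1 0 ^ 2, (Real.sqrt 2 : ℂ) * (g 1 0 * g 1 1), g 1 1 ^ 2]

/-- The point `p = (1/√2)(u₁⊗e₁ + u₃⊗e₂) = (1/√2, 0, 0, 0, 0, 1/√2) ∈ ℂ⁶`. -/
noncomputable def pvec : Fin 3 × Fin 2 → ℂ :=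
  fun x => if x = (0, 0) ∨ x = (2, 1) then (1 / (Real.sqrt 2 : ℂ)) else 0

/-- Let `A = [[0,1],[−1,0]]` and `B = [[0,i],[i,0]]`, both elements of `SU(2)`, and let
`σ = (A, B) ∈ SU(2)×SU(2)`. Then: (1) `(S(A) ⊗ B)·p = i·p`, so `σ` stabilizes the
complex line `ℂ·p`; (2) `σ⁴ = (I₂, I₂)` while `σ² = (−I₂, −I₂) ≠ (I₂, I₂)`, so `σ` has
order `4` in `SU(2)×SU(2)`. -/
theorem sigma_stabilizes_line_and_has_order_four :
    let A : Matrix (Fin 2) (Fin 2) ℂ := !![0, 1; -1, 0]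
    let B : Matrix (Fin 2) (Fin 2) ℂ := !![0, Complex.I; Complex.I, 0]
    A ∈ Matrix.specialUnitaryGroup (Fin 2) ℂ ∧
    B ∈ Matrix.specialUnitaryGroup (Fin 2) ℂ ∧
    (SMat A ⊗ₖ B).mulVec pvec = Complex.I • pvec ∧
    (A, B) ^ 4 = 1 ∧
    (A, B) ^ 2 = (-1, -1) ∧
    (A, B) ^ 2 ≠ 1 ∧
    orderOf (A, B) = 4 := by
  intro A B
  have hA2 : A ^ 2 = -1 := by
    rw [pow_two]
    ext i j
    fin_cases i <;> fin_cases j <;>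
      simp [A, Matrix.mul_apply, Fin.sum_univ_two, Matrix.one_apply]
  have hB2 : B ^ 2 = -1 := by
    rw [pow_two]
    ext i j
    fin_cases i <;> fin_cases j <;>
      simp [B, Matrix.mul_apply, Fin.sum_univ_two, Matrix.one_apply, Complex.I_mul_I]
  have hs2 : (A, B) ^ 2 = (-1, -1) := by
    rw [Prod.pow_def, hA2, hB2]
  have hs4 : (A, B) ^ 4 = 1 := by
    have : (4 : ℕ) = 2 * 2 := rfl
    rw [this, pow_mul, hs2]
    rw [Prod.pow_def]
    simp [neg_one_sq]
  have hne : (A, B) ^ 2 ≠ 1 := by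
    rw [hs2]
    intro h
    have h1 : (-1 : Matrix (Fin 2) (Fin 2) ℂ) = 1 := congrArg Prod.fst h
    have := congrFun (congrFun h1 0) 0
    simp [Matrix.one_apply] at this
    exact (by norm_num : (-1 : ℂ) ≠ 1) this
  refine ⟨?_, ?_, ?_, hs4, hs2, hne, ?_⟩
  · rw [Matrix.mem_specialUnitaryGroup_iff, Matrix.mem_unitaryGroup_iff]
    constructor
    · ext i j
      fin_cases i <;> fin_cases j <;>
        simp [A, Matrix.mul_apply, Fin.sum_univ_two, Matrix.one_apply, star,
          Matrix.conjTranspose_apply, Complex.ext_iff]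
    · simp [A, Matrix.det_fin_two_of]
  · rw [Matrix.mem_specialUnitaryGroup_iff, Matrix.mem_unitaryGroup_iff]
    constructor
    · ext i j
      fin_cases i <;> fin_cases j <;>
        simp [B, Matrix.mul_apply, Fin.sum_univ_two, Matrix.one_apply, star,
          Matrix.conjTranspose_apply, Complex.conj_I, Complex.ext_iff]
    · simp [B, Matrix.det_fin_two_of, Complex.I_mul_I]
  · ext x
    obtain ⟨i, j⟩ := x
    have h2 : ((Real.sqrt 2 : ℝ) : ℂ) ≠ 0 := by
      norm_cast
      positivity
    fin_cases i <;> fin_cases j <;>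
      · simp [SMat, pvec, A, B, Matrix.mulVec, dotProduct, Fintype.sum_prod_type,
          Fin.sum_univ_three, Fin.sum_univ_two, Matrix.kroneckerMap_apply,
          Prod.ext_iff]
  · have : (4 : ℕ) = 2 ^ 2 := rfl
    rw [this]
    refine orderOf_eq_prime_pow ?_ ?_
    · rw [pow_one]; exact hne
    · rw [show (2:ℕ)^2 = 4 from rfl]; exact hs4
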